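/- Let s and r be two nodes, each with node-selection probabilities, values γ, endpoints L and payoffs u defined as in the context, and let i ∈ {1,…,n−1}. (i) If u_{s,i} ≥ u_{r,i}, γ_{s,i} ≤ γ_{r,i} and α_{r,i} < α_{s,i}, then u_{s,i+1} > u_{r,i+1}. (ii) If u_{s,i} ≥ u_{r,i}, γ_{s,i} < γ_{r,i} and α_{s,i} ≥ α_{r,i}, then u_{s,i+1} > u_{r,i+1}. -/

import Mathlib

/-- Probability of at least `m` successes in `l-1` Bernoulli(x) trials. -/
noncomputable def w (l m : ℕ) (x : ℝ) : ℝ :=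
  ∑ i ∈ Finset.Icc m (l - 1), ((l - 1).choose i : ℝ) * x ^ i * (1 - x) ^ (l - 1 - i)

/-- `W x = 1 - w x`. -/
noncomputable def W (l m : ℕ) (x : ℝ) : ℝ := 1 - w l m x

/-- `γ_{a,i} = ∑_{j=i}^n α_{a,j}` for a node with selection probabilities `α`. -/
noncomputable def gamN (n : ℕ) (α : ℕ → ℝ) (i : ℕ) : ℝ :=
  ∑ j ∈ Finset.Icc i n, α j

/-- The maximum expected payoff `u_{a,i} = (f_i(L_{a,i-1}) - c) · W(γ_{a,i})` at state `i`
for a node with selection probabilities `α` and lower endpoints `L`. -/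
noncomputable def payoff (l m n : ℕ) (c : ℝ) (f : ℕ → ℝ → ℝ)
    (α : ℕ → ℝ) (L : ℕ → ℝ) (i : ℕ) : ℝ :=
  (f i (L (i - 1)) - c) * W l m (gamN n α i)

/-!
Both hypotheses give `γ_{s,i+1} < γ_{r,i+1}`, hence `W(γ_{r,i+1}) < W(γ_{s,i+1})`: `w` is
strictly increasing on `[0,1]` because its derivative is a positive multiple of a Bernstein
polynomial. The recursion for `L_{a,i}` gives `u_{a,i} = (f_i(L_{a,i}) - c) W(γ_{a,i+1})`, while
`u_{a,i+1} = (f_{i+1}(L_{a,i}) - c) W(γ_{a,i+1})`. If `L_{r,i} ≤ L_{s,i}`, monotonicity of `f_{i+1}`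
concludes. Otherwise Assumption 1 says that the ratio `u_{a,i+1} / u_{a,i}`, which equals
`(f_{i+1}(L_{a,i}) - c) / (f_i(L_{a,i}) - c)`, is larger for `s` than for `r`, and multiplying
by `u_{r,i} ≤ u_{s,i}` concludes.
-/

open Finset Polynomial

lemma derivative_sum_bernsteinPolynomial_Ico {R : Type*} [CommRing R] {N j : ℕ} (hj : j < N) :
    derivative (∑ k ∈ Ico j N, bernsteinPolynomial R N (k + 1)) =
      N * bernsteinPolynomial R (N - 1) j := by
  have hN : bernsteinPolynomial R (N - 1) N = 0 := bernsteinPolynomial.eq_zero_of_lt R (by omega)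
  have htel := sum_Ico_sub (fun k => -bernsteinPolynomial R (N - 1) k) hj.le
  simp only [neg_sub_neg, hN, neg_zero, zero_sub, neg_neg] at htel
  simp only [derivative_sum, bernsteinPolynomial.derivative_succ, ← mul_sum, htel]

lemma bernsteinPolynomial_eval_pos {n ν : ℕ} (h : ν ≤ n) {x : ℝ} (hx : x ∈ Set.Ioo 0 1) :
    0 < (bernsteinPolynomial ℝ n ν).eval x := by
  have := Nat.choose_pos h
  have := hx.1
  have : 0 < 1 - x := sub_pos.2 hx.2
  simp only [bernsteinPolynomial, eval_mul, eval_natCast, eval_pow, eval_X, eval_sub, eval_one]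
  positivity

lemma w_eq_eval {l m : ℕ} (hm : 1 ≤ m) (x : ℝ) :
    w l m x = (∑ k ∈ Ico (m - 1) (l - 1), bernsteinPolynomial ℝ (l - 1) (k + 1)).eval x := by
  rw [w, eval_finsetSum, sum_Ico_add' (fun k => (bernsteinPolynomial ℝ (l - 1) k).eval x),
    Nat.sub_add_cancel hm, Ico_add_one_right_eq_Icc]
  simp [bernsteinPolynomial]

lemma w_one {l m : ℕ} (hm : 1 ≤ m) (hml : m ≤ l - 1) : w l m 1 = 1 := by
  rw [w_eq_eval hm, eval_finsetSum]
  simp only [bernsteinPolynomial.eval_at_1]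
  rw [sum_eq_single_of_mem (l - 2) (by simp; omega) fun k hk _ => if_neg (by simp at hk; omega),
    if_pos (by omega)]

lemma w_strictMonoOn {l m : ℕ} (hm : 1 ≤ m) (hml : m ≤ l - 1) :
    StrictMonoOn (w l m) (Set.Icc 0 1) := by
  rw [funext (w_eq_eval hm)]
  refine strictMonoOn_of_deriv_pos (convex_Icc 0 1) (Polynomial.continuousOn _) fun x hx => ?_
  rw [interior_Icc] at hx
  rw [Polynomial.deriv, derivative_sum_bernsteinPolynomial_Ico (by omega), eval_mul, eval_natCast]
  exact mul_pos (by norm_cast; omega) (bernsteinPolynomial_eval_pos (by omega) hx)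

lemma W_strictAntiOn {l m : ℕ} (hm : 1 ≤ m) (hml : m ≤ l - 1) :
    StrictAntiOn (W l m) (Set.Icc 0 1) :=
  fun _ hx _ hy hxy => sub_lt_sub_left (w_strictMonoOn hm hml hx hy hxy) 1

lemma W_pos {l m : ℕ} (hm : 1 ≤ m) (hml : m ≤ l - 1) {x : ℝ} (hx : x ∈ Set.Ico 0 1) :
    0 < W l m x := by
  have := w_strictMonoOn hm hml (Set.Ico_subset_Icc_self hx) ⟨zero_le_one, le_rfl⟩ hx.2
  rw [w_one hm hml] at this
  exact sub_pos.2 this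

lemma gamN_eq_add {n i : ℕ} (α : ℕ → ℝ) (hi : i ≤ n) : gamN n α i = α i + gamN n α (i + 1) := by
  rw [gamN, gamN, Icc_add_one_left_eq_Ioc, add_sum_Ioc_eq_sum_Icc hi]

lemma gamN_mem_Ico {n j : ℕ} {α : ℕ → ℝ} (hα0 : ∀ k ∈ Icc 1 n, 0 ≤ α k)
    (hαsum : ∑ k ∈ Icc 1 n, α k < 1) (hj : 1 ≤ j) : gamN n α j ∈ Set.Ico 0 1 := by
  have hsub : Icc j n ⊆ Icc 1 n := Icc_subset_Icc_left hj
  refine ⟨sum_nonneg fun k hk => hα0 k (hsub hk), lt_of_le_of_lt ?_ hαsum⟩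
  exact sum_le_sum_of_subset_of_nonneg hsub fun k hk _ => hα0 k hk

lemma lt_apply_endpoint {l m n : ℕ} (hm : 1 ≤ m) (hml : m ≤ l - 1) {c v : ℝ} {f : ℕ → ℝ → ℝ}
    (hford : ∀ i ∈ Icc 1 n, ∀ j ∈ Icc 1 n, i < j → ∀ x : ℝ, f i x < f j x) (hfv : c < f 1 v)
    {α : ℕ → ℝ} (hα0 : ∀ j ∈ Icc 1 n, 0 ≤ α j) (hαsum : ∑ j ∈ Icc 1 n, α j < 1)
    {L : ℕ → ℝ} (hL0 : L 0 = v)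
    (hLrec : ∀ i ∈ Icc 1 n,
      (f i (L i) - c) * W l m (gamN n α (i + 1)) = (f i (L (i - 1)) - c) * W l m (gamN n α i))
    {j : ℕ} (hj : j ∈ Icc 1 n) : c < f j (L (j - 1)) ∧ c < f j (L j) := by
  have hW (k : ℕ) (hk : 1 ≤ k) : 0 < W l m (gamN n α k) := W_pos hm hml (gamN_mem_Ico hα0 hαsum hk)
  have hnext (k : ℕ) (hk : k ∈ Icc 1 n) (h : c < f k (L (k - 1))) : c < f k (L k) := by
    have hprod := hLrec k hk ▸ mul_pos (sub_pos.2 h) (hW k (mem_Icc.1 hk).1)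
    exact sub_pos.1 (pos_of_mul_pos_left hprod (hW (k + 1) (by omega)).le)
  suffices c < f j (L (j - 1)) from ⟨this, hnext j hj this⟩
  obtain ⟨hj1, hjn⟩ := mem_Icc.1 hj
  induction j, hj1 using Nat.le_induction with
  | base => simpa [hL0] using hfv
  | succ k hk ih =>
    have hkn : k ∈ Icc 1 n := mem_Icc.2 ⟨hk, by omega⟩
    simpa using (hnext k hkn (ih hkn (by omega))).trans (hford k hkn (k + 1) hj (by omega) (L k))

lemma mul_lt_mul_of_div_strictMono {g h : ℝ → ℝ} (hh : Monotone h) (hgh : ∀ x, g x < h x)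
    (hdiv : ∀ x y, y < x → 0 < g y → g y / h y < g x / h x)
    {xs xr Ws Wr : ℝ} (hgs : 0 < g xs) (hgr : 0 < g xr) (hWr : 0 < Wr) (hW : Wr < Ws)
    (hle : g xr * Wr ≤ g xs * Ws) : h xr * Wr < h xs * Ws := by
  have hhr : 0 < h xr := hgr.trans (hgh xr)
  rcases le_or_gt xr xs with hx | hx
  · exact (mul_lt_mul_of_pos_left hW hhr).trans_le
      (mul_le_mul_of_nonneg_right (hh hx) (hWr.trans hW).le)
  have hcross : g xs * h xr < g xr * h xs :=
    (div_lt_div_iff₀ (hgs.trans (hgh xs)) hhr).1 (hdiv xr xs hx hgs)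
  refine lt_of_mul_lt_mul_left ?_ hgr.le
  calc g xr * (h xr * Wr) = h xr * (g xr * Wr) := by ring
    _ ≤ h xr * (g xs * Ws) := mul_le_mul_of_nonneg_left hle hhr.le
    _ = g xs * h xr * Ws := by ring
    _ < g xr * h xs * Ws := mul_lt_mul_of_pos_right hcross (hWr.trans hW)
    _ = g xr * (h xs * Ws) := by ring

lemma payoff_succ_lt_of_gamN_succ_lt {l m n : ℕ} (hm : 1 ≤ m) (hml : m ≤ l - 1)
    {c v : ℝ} {f : ℕ → ℝ → ℝ} (hfm : ∀ j ∈ Icc 1 n, StrictMono (f j))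
    (hford : ∀ i ∈ Icc 1 n, ∀ j ∈ Icc 1 n, i < j → ∀ x : ℝ, f i x < f j x)
    (hfv : c < f 1 v)
    (hassum : ∀ i ∈ Icc 1 n, ∀ j ∈ Icc 1 n, i < j →
      ∀ x y : ℝ, y < x → c < f i y → (f i y - c) / (f j y - c) < (f i x - c) / (f j x - c))
    {αs αr : ℕ → ℝ}
    (hαs0 : ∀ j ∈ Icc 1 n, 0 ≤ αs j) (hαssum : ∑ j ∈ Icc 1 n, αs j < 1)
    (hαr0 : ∀ j ∈ Icc 1 n, 0 ≤ αr j) (hαrsum : ∑ j ∈ Icc 1 n, αr j < 1)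
    {Ls Lr : ℕ → ℝ} (hLs0 : Ls 0 = v) (hLr0 : Lr 0 = v)
    (hLsrec : ∀ i ∈ Icc 1 n,
      (f i (Ls i) - c) * W l m (gamN n αs (i + 1)) = (f i (Ls (i - 1)) - c) * W l m (gamN n αs i))
    (hLrrec : ∀ i ∈ Icc 1 n,
      (f i (Lr i) - c) * W l m (gamN n αr (i + 1)) = (f i (Lr (i - 1)) - c) * W l m (gamN n αr i))
    {i : ℕ} (hi1 : 1 ≤ i) (hin : i + 1 ≤ n)
    (hu : payoff l m n c f αr Lr i ≤ payoff l m n c f αs Ls i)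
    (hγ : gamN n αs (i + 1) < gamN n αr (i + 1)) :
    payoff l m n c f αr Lr (i + 1) < payoff l m n c f αs Ls (i + 1) := by
  have hi : i ∈ Icc 1 n := mem_Icc.2 ⟨hi1, by omega⟩
  have hi' : i + 1 ∈ Icc 1 n := mem_Icc.2 ⟨by omega, hin⟩
  have hγs := gamN_mem_Ico hαs0 hαssum (Nat.le_add_left 1 i)
  have hγr := gamN_mem_Ico hαr0 hαrsum (Nat.le_add_left 1 i)
  rw [payoff, payoff, ← hLsrec i hi, ← hLrrec i hi] at hu
  simp only [payoff, add_tsub_cancel_right]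
  refine mul_lt_mul_of_div_strictMono (g := fun x => f i x - c) (h := fun x => f (i + 1) x - c)
    (fun _ _ hxy => sub_le_sub_right ((hfm (i + 1) hi').monotone hxy) c)
    (fun x => sub_lt_sub_right (hford i hi (i + 1) hi' (by omega) x) c)
    (fun x y hxy hy => hassum i hi (i + 1) hi' (by omega) x y hxy (sub_pos.1 hy))
    (sub_pos.2 (lt_apply_endpoint hm hml hford hfv hαs0 hαssum hLs0 hLsrec hi).2)
    (sub_pos.2 (lt_apply_endpoint hm hml hford hfv hαr0 hαrsum hLr0 hLrrec hi).2)
    (W_pos hm hml hγr) ?_ hu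
  exact W_strictAntiOn hm hml (Set.Ico_subset_Icc_self hγs) (Set.Ico_subset_Icc_self hγr) hγ

theorem stmt13_general (l m n : ℕ) (hm : 1 ≤ m) (hml : m ≤ l - 1)
    (c v : ℝ) (f : ℕ → ℝ → ℝ)
    (hfm : ∀ j ∈ Finset.Icc 1 n, StrictMono (f j))
    (hford : ∀ i ∈ Finset.Icc 1 n, ∀ j ∈ Finset.Icc 1 n, i < j → ∀ x : ℝ, f i x < f j x)
    (hfv : c < f 1 v)
    (hassum : ∀ i ∈ Finset.Icc 1 n, ∀ j ∈ Finset.Icc 1 n, i < j →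
      ∀ x y : ℝ, y < x → c < f i y →
        (f i y - c) / (f j y - c) < (f i x - c) / (f j x - c))
    (αs αr : ℕ → ℝ)
    (hαs0 : ∀ j ∈ Finset.Icc 1 n, 0 ≤ αs j) (hαssum : ∑ j ∈ Finset.Icc 1 n, αs j < 1)
    (hαr0 : ∀ j ∈ Finset.Icc 1 n, 0 ≤ αr j) (hαrsum : ∑ j ∈ Finset.Icc 1 n, αr j < 1)
    (Ls Lr : ℕ → ℝ) (hLs0 : Ls 0 = v) (hLr0 : Lr 0 = v)
    (hLsrec : ∀ i ∈ Finset.Icc 1 n,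
      (f i (Ls i) - c) * W l m (gamN n αs (i + 1)) =
        (f i (Ls (i - 1)) - c) * W l m (gamN n αs i))
    (hLrrec : ∀ i ∈ Finset.Icc 1 n,
      (f i (Lr i) - c) * W l m (gamN n αr (i + 1)) =
        (f i (Lr (i - 1)) - c) * W l m (gamN n αr i))
    (i : ℕ) (hi1 : 1 ≤ i) (hin : i + 1 ≤ n) :
    ((payoff l m n c f αr Lr i ≤ payoff l m n c f αs Ls i →
      gamN n αs i ≤ gamN n αr i → αr i < αs i →
      payoff l m n c f αr Lr (i + 1) < payoff l m n c f αs Ls (i + 1)) ∧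
    (payoff l m n c f αr Lr i ≤ payoff l m n c f αs Ls i →
      gamN n αs i < gamN n αr i → αr i ≤ αs i →
      payoff l m n c f αr Lr (i + 1) < payoff l m n c f αs Ls (i + 1))) := by
  have hs := gamN_eq_add αs (by omega : i ≤ n)
  have hr := gamN_eq_add αr (by omega : i ≤ n)
  have key := payoff_succ_lt_of_gamN_succ_lt hm hml hfm hford hfv hassum hαs0 hαssum hαr0 hαrsum
    hLs0 hLr0 hLsrec hLrrec hi1 hin
  exact ⟨fun hu _ _ => key hu (by linarith), fun hu _ _ => key hu (by linarith)⟩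

theorem stmt13 (l m n : ℕ) (hm : 1 ≤ m) (hml : m ≤ l - 1) (hn : 1 ≤ n)
    (c v : ℝ) (f : ℕ → ℝ → ℝ)
    (hfc : ∀ j ∈ Finset.Icc 1 n, Continuous (f j))
    (hfm : ∀ j ∈ Finset.Icc 1 n, StrictMono (f j))
    (hfb : ∀ j ∈ Finset.Icc 1 n, Function.Bijective (f j))
    (hford : ∀ i ∈ Finset.Icc 1 n, ∀ j ∈ Finset.Icc 1 n, i < j → ∀ x : ℝ, f i x < f j x)
    (hfv : c < f 1 v)
    (hassum : ∀ i ∈ Finset.Icc 1 n, ∀ j ∈ Finset.Icc 1 n, i < j →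
      ∀ x y : ℝ, y < x → c < f i y →
        (f i y - c) / (f j y - c) < (f i x - c) / (f j x - c))
    (αs αr : ℕ → ℝ)
    (hαs0 : ∀ j ∈ Finset.Icc 1 n, 0 ≤ αs j) (hαssum : ∑ j ∈ Finset.Icc 1 n, αs j < 1)
    (hαr0 : ∀ j ∈ Finset.Icc 1 n, 0 ≤ αr j) (hαrsum : ∑ j ∈ Finset.Icc 1 n, αr j < 1)
    (Ls Lr : ℕ → ℝ) (hLs0 : Ls 0 = v) (hLr0 : Lr 0 = v)
    (hLsrec : ∀ i ∈ Finset.Icc 1 n,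
      (f i (Ls i) - c) * W l m (gamN n αs (i + 1)) =
        (f i (Ls (i - 1)) - c) * W l m (gamN n αs i))
    (hLrrec : ∀ i ∈ Finset.Icc 1 n,
      (f i (Lr i) - c) * W l m (gamN n αr (i + 1)) =
        (f i (Lr (i - 1)) - c) * W l m (gamN n αr i))
    (i : ℕ) (hi1 : 1 ≤ i) (hin : i + 1 ≤ n) :
    ((payoff l m n c f αr Lr i ≤ payoff l m n c f αs Ls i →
      gamN n αs i ≤ gamN n αr i → αr i < αs i →
      payoff l m n c f αr Lr (i + 1) < payoff l m n c f αs Ls (i + 1)) ∧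
    (payoff l m n c f αr Lr i ≤ payoff l m n c f αs Ls i →
      gamN n αs i < gamN n αr i → αr i ≤ αs i →
      payoff l m n c f αr Lr (i + 1) < payoff l m n c f αs Ls (i + 1))) :=
  stmt13_general l m n hm hml c v f hfm hford hfv hassum αs αr hαs0 hαssum hαr0 hαrsum Ls Lr hLs0
    hLr0 hLsrec hLrrec i hi1 hin
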